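/- Let n = 2m and let H_α be the Hermitian adjacency matrix of an oriented n-cycle with weights satisfying Σ_j α(j) = π. Then H_α has at most m distinct eigenvalues. -/

import Mathlib

/-!
Write `cycleH n α = S + Sᴴ` with `S` the weighted cyclic shift. `S` is unitary and `S ^ n` is the
scalar `exp (i ∑ α)`, which is `-1` when `∑ α = π`; for `n = 2m` this forces `Sᴴ ^ m = -S ^ m`.
The Dickson polynomial `D_m = dickson 1 1 m = 2 T_m (X / 2)` satisfies
`D_m (a + a⁻¹) = a ^ m + a⁻¹ ^ m`, so `D_m` annihilates `S + Sᴴ`, and every eigenvalue is one of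
the at most `m` roots of `D_m`.
-/

open Polynomial Matrix Fin.NatCast

/-- The Hermitian adjacency matrix of an oriented `n`-cycle. -/
noncomputable def cycleH (n : ℕ) (α : Fin n → ℝ) : Matrix (Fin n) (Fin n) ℂ :=
  fun j k =>
    (if (k : ℕ) = ((j : ℕ) + 1) % n then Complex.exp (Complex.I * (α j)) else 0) +
    (if (j : ℕ) = ((k : ℕ) + 1) % n then Complex.exp (-(Complex.I * (α k))) else 0)

theorem aeval_dickson_one_one_add {R A : Type*} [CommRing R] [Ring A] [Algebra R A] {a b : A}
    (hab : a * b = 1) (hba : b * a = 1) :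
    ∀ n, aeval (a + b) (dickson 1 (1 : R) n) = a ^ n + b ^ n
  | 0 => by simp only [dickson_zero, pow_zero]; norm_num [map_ofNat, one_add_one_eq_two]
  | 1 => by simp
  | n + 2 => by
    rw [dickson_add_two, map_sub, map_mul, aeval_X, map_mul, aeval_C, map_one, one_mul,
      aeval_dickson_one_one_add hab hba n, aeval_dickson_one_one_add hab hba (n + 1)]
    have hab' : a * b ^ (n + 1) = b ^ n := by rw [pow_succ', ← mul_assoc, hab, one_mul]
    have hba' : b * a ^ (n + 1) = a ^ n := by rw [pow_succ', ← mul_assoc, hba, one_mul]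
    rw [add_mul, mul_add, mul_add, hab', hba', ← pow_succ', ← pow_succ']
    abel

theorem natDegree_dickson_one_one {K : Type*} [Field K] [NeZero (2 : K)] (n : ℕ) :
    (dickson 1 (1 : K) n).natDegree = n := by
  let := invertibleOfNonzero (two_ne_zero : (2 : K) ≠ 0)
  rw [dickson_one_one_eq_chebyshev_T, ← C_ofNat, natDegree_C_mul two_ne_zero, natDegree_comp,
    Chebyshev.natDegree_T, natDegree_C_mul_X _ (by simpa using two_ne_zero)]
  simp

theorem add_pow_eq_zero_of_pow_two_mul_eq_neg_one {R : Type*} [Ring R] {a b : R} {m : ℕ}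
    (hab : a * b = 1) (hba : b * a = 1) (h : a ^ (2 * m) = -1) : a ^ m + b ^ m = 0 := by
  have hbm : b ^ m * a ^ m = 1 := by
    rw [← (show Commute b a from hba.trans hab.symm).mul_pow, hba, one_pow]
  calc a ^ m + b ^ m = a ^ m + b ^ m * -(a ^ m * a ^ m) := by
        rw [← pow_add, ← two_mul, h, neg_neg, mul_one]
    _ = 0 := by rw [mul_neg, ← mul_assoc, hbm, one_mul, add_neg_cancel]

theorem spectrum_subset_rootSet_of_aeval_eq_zero {K A : Type*} [Field K] [Ring A] [Nontrivial A]
    [Algebra K A] {a : A} {p : K[X]} (hp : p ≠ 0) (h : aeval a p = 0) :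
    spectrum K a ⊆ p.rootSet K := by
  intro μ hμ
  have hμp := spectrum.subset_polynomial_aeval a p ⟨μ, hμ, rfl⟩
  rw [h, spectrum.zero_eq, Set.mem_singleton_iff] at hμp
  exact mem_rootSet.2 ⟨hp, by simpa using hμp⟩

theorem ncard_spectrum_le_natDegree_of_aeval_eq_zero {K A : Type*} [Field K] [Ring A]
    [Nontrivial A] [Algebra K A] {a : A} {p : K[X]} (hp : p ≠ 0) (h : aeval a p = 0) :
    (spectrum K a).ncard ≤ p.natDegree :=
  (Set.ncard_le_ncard (spectrum_subset_rootSet_of_aeval_eq_zero hp h) (p.rootSet_finite K)).trans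
    (p.ncard_rootSet_le K)

noncomputable def cycleShift (n : ℕ) (α : Fin n → ℝ) : Matrix (Fin n) (Fin n) ℂ :=
  fun j k => if (k : ℕ) = ((j : ℕ) + 1) % n then Complex.exp (Complex.I * (α j)) else 0

theorem star_exp_I_mul_ofReal (r : ℝ) :
    star (Complex.exp (Complex.I * r)) = Complex.exp (-(Complex.I * r)) := by
  rw [Complex.star_def, ← Complex.exp_conj]
  simp

theorem cycleH_eq_cycleShift_add_conjTranspose (n : ℕ) (α : Fin n → ℝ) :
    cycleH n α = cycleShift n α + (cycleShift n α)ᴴ := by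
  ext j k
  simp only [cycleH, cycleShift, Matrix.add_apply, conjTranspose_apply, apply_ite star, star_zero,
    star_exp_I_mul_ofReal]

section
variable {n : ℕ} [NeZero n] (α : Fin n → ℝ)

theorem cycleShift_apply (j k : Fin n) :
    cycleShift n α j k = if k = j + 1 then Complex.exp (Complex.I * α j) else 0 := by
  simp [cycleShift, Fin.ext_iff, Fin.val_add, Nat.add_mod]

theorem cycleShift_mul_conjTranspose : cycleShift n α * (cycleShift n α)ᴴ = 1 := by
  ext j l
  simp only [mul_apply, conjTranspose_apply, cycleShift_apply, ite_mul, zero_mul,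
    Finset.sum_ite_eq', Finset.mem_univ, if_true, apply_ite star, star_zero, mul_ite, mul_zero,
    add_left_inj, star_exp_I_mul_ofReal, one_apply, eq_comm (a := l)]
  split_ifs with h
  · rw [h, ← Complex.exp_add, add_neg_cancel, Complex.exp_zero]
  · rfl

theorem cycleShift_pow_apply (k : ℕ) (j l : Fin n) :
    (cycleShift n α ^ k) j l = if l = j + k then
      Complex.exp (Complex.I * ∑ t ∈ Finset.range k, (α (j + t) : ℂ)) else 0 := by
  induction k generalizing l with
  | zero => simp [one_apply, eq_comm]
  | succ k ih =>
    simp only [pow_succ, mul_apply, ih, ite_mul, zero_mul, Finset.sum_ite_eq', Finset.mem_univ,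
      if_true, cycleShift_apply]
    rw [mul_ite, mul_zero, ← Complex.exp_add, Nat.cast_succ, ← add_assoc, Finset.sum_range_succ,
      mul_add]

theorem cycleShift_pow_self :
    cycleShift n α ^ n = Complex.exp (Complex.I * ↑(∑ j, α j)) • 1 := by
  ext j l
  have hsum : ∑ t ∈ Finset.range n, (α (j + t) : ℂ) = ↑(∑ t, α t) := by
    push_cast
    rw [← Fin.sum_univ_eq_sum_range (fun t => (α (j + t) : ℂ))]
    simp only [Fin.cast_val_eq_self]
    exact Equiv.sum_comp (Equiv.addLeft j) (fun t => (α t : ℂ))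
  rw [cycleShift_pow_apply, Fin.natCast_self, add_zero, hsum, Matrix.smul_apply, one_apply,
    smul_eq_mul, mul_ite, mul_one, mul_zero]
  simp only [eq_comm]
end

theorem oriented_even_cycle_few_eigenvalues_general (m : ℕ)
    (α : Fin (2 * m) → ℝ) (hα : ∑ j, α j = Real.pi) :
    (spectrum ℂ (cycleH (2 * m) α)).ncard ≤ m := by
  have hm : m ≠ 0 := by
    rintro rfl
    exact Real.pi_ne_zero (by simpa using hα.symm)
  have : NeZero (2 * m) := ⟨by omega⟩
  set S := cycleShift (2 * m) α
  have hSS : S * Sᴴ = 1 := cycleShift_mul_conjTranspose α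
  have hSS' : Sᴴ * S = 1 := mul_eq_one_comm.mp hSS
  have hS : S ^ (2 * m) = -1 := by
    rw [cycleShift_pow_self, hα, mul_comm Complex.I, Complex.exp_pi_mul_I, neg_one_smul]
  have hD : aeval (cycleH (2 * m) α) (dickson 1 (1 : ℂ) m) = 0 := by
    rw [cycleH_eq_cycleShift_add_conjTranspose, aeval_dickson_one_one_add hSS hSS']
    exact add_pow_eq_zero_of_pow_two_mul_eq_neg_one hSS hSS' hS
  have hD0 : dickson 1 (1 : ℂ) m ≠ 0 :=
    ne_zero_of_natDegree_gt (n := 0) (by rw [natDegree_dickson_one_one]; omega)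
  calc (spectrum ℂ (cycleH (2 * m) α)).ncard
      ≤ (dickson 1 (1 : ℂ) m).natDegree := ncard_spectrum_le_natDegree_of_aeval_eq_zero hD0 hD
    _ = m := natDegree_dickson_one_one m

/-- If the weights of an oriented even cycle `C_{2m}` satisfy `∑ α j = π`, then the
Hermitian adjacency matrix has at most `m` distinct eigenvalues. -/
theorem oriented_even_cycle_few_eigenvalues (m : ℕ) (hm : 2 ≤ m)
    (α : Fin (2 * m) → ℝ) (hα : ∑ j, α j = Real.pi) :
    (spectrum ℂ (cycleH (2 * m) α)).ncard ≤ m :=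
  oriented_even_cycle_few_eigenvalues_general m α hα
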